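/- arXiv:2309.08161 — 4 statements merged into one kernel-verified Lean document; each statement's English description precedes it below -/
import Mathlib

section
/- Let X be a set equipped with k binary operations ▷₁,…,▷ₖ such that each (X, ▷ₘ) is a quandle, and let i, j ∈ {1,…,k}. Suppose that for all x, y, z ∈ X one has (x ▷ᵢ⁻¹ y) ▷ⱼ⁻¹ z = (x ▷ⱼ⁻¹ z) ▷ᵢ⁻¹ (y ▷ⱼ⁻¹ z). Then for all x, y, z ∈ X: (x ▷ᵢ y) ▷ⱼ z = (x ▷ⱼ z) ▷ᵢ (y ▷ⱼ z). -/
/-!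
The hypothesis says that the inverse translation `· ▷ⱼ⁻¹ z` is an endomorphism of `(X, ▷ᵢ⁻¹)`.
Since `▷ᵢ` and `▷ᵢ⁻¹` undo each other, it is then also an endomorphism of `(X, ▷ᵢ)`, and hence
so is its inverse bijection `· ▷ⱼ z`, which is the claim.
-/

namespace Function.Semiconj₂

variable {α β : Type*} {f : α → β}

theorem of_div {op div : α → α → α} {op' div' : β → β → β}
    (hdiv : ∀ a b, div (op a b) b = a) (hop' : ∀ x y, op' (div' x y) y = x)
    (h : Semiconj₂ f div div') : Semiconj₂ f op op' := fun a b => by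
  calc f (op a b) = op' (div' (f (op a b)) (f b)) (f b) := (hop' _ _).symm
    _ = op' (f a) (f b) := by rw [← h.eq, hdiv]

theorem inverse_left {ga : α → α → α} {gb : β → β → β} {g : β → α}
    (hgf : LeftInverse g f) (hfg : RightInverse g f) (h : Semiconj₂ f ga gb) :
    Semiconj₂ g gb ga := fun x y => by
  calc g (gb x y) = g (gb (f (g x)) (f (g y))) := by rw [hfg x, hfg y]
    _ = ga (g x) (g y) := by rw [← h.eq, hgf]

end Function.Semiconj₂

theorem quandles_inv_dist_imp₃_general {X : Type*} {k : ℕ}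
    (op inv : Fin k → X → X → X)
    (hinv_right : ∀ m x y, op m (inv m x y) y = x)
    (hinv_left : ∀ m x y, inv m (op m x y) y = x)
    (i j : Fin k)
    (h : ∀ x y z : X, inv j (inv i x y) z = inv i (inv j x z) (inv j y z)) :
    ∀ x y z : X, op j (op i x y) z = op i (op j x z) (op j y z) := by
  intro x y z
  have hinv : Function.Semiconj₂ (inv j · z) (inv i) (inv i) := fun x y => h x y z
  have hop : Function.Semiconj₂ (inv j · z) (op i) (op i) :=
    hinv.of_div (hinv_left i) (hinv_right i)
  exact (hop.inverse_left (hinv_right j · z) (hinv_left j · z)).eq x y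

/-- Let `X` carry `k` binary operations `▷₁, …, ▷ₖ` such that each
`(X, ▷ₘ)` is a quandle, and let `i, j` be indices.  If
`(x ▷ᵢ⁻¹ y) ▷ⱼ⁻¹ z = (x ▷ⱼ⁻¹ z) ▷ᵢ⁻¹ (y ▷ⱼ⁻¹ z)` for all `x, y, z`, then
`(x ▷ᵢ y) ▷ⱼ z = (x ▷ⱼ z) ▷ᵢ (y ▷ⱼ z)` for all `x, y, z`. -/
theorem quandles_inv_dist_imp₃ {X : Type*} {k : ℕ}
    (op inv : Fin k → X → X → X)
    (hidem : ∀ m x, op m x x = x)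
    (hinv_right : ∀ m x y, op m (inv m x y) y = x)
    (hinv_left : ∀ m x y, inv m (op m x y) y = x)
    (hself_dist : ∀ m x y z, op m (op m x y) z = op m (op m x z) (op m y z))
    (i j : Fin k)
    (h : ∀ x y z : X, inv j (inv i x y) z = inv i (inv j x z) (inv j y z)) :
    ∀ x y z : X, op j (op i x y) z = op i (op j x z) (op j y z) :=
  quandles_inv_dist_imp₃_general op inv hinv_right hinv_left i j h
end

section
/- Let G be a cyclic (hence commutative) group and let σ, τ : G → G be group automorphisms. Define x ▷₁ y = σ(y)⁻¹ σ(x) y and x ▷₂ y = τ(y)⁻¹ τ(x) y. Then: (a) x ▷ᵢ x = x for all x and i ∈ {1,2}; (b) for every y and each i ∈ {1,2}, the right translation x ↦ x ▷ᵢ y is a bijection of G; and (c) for all i, j ∈ {1,2} and all x, y, z ∈ G, (x ▷ᵢ y) ▷ⱼ z = (x ▷ⱼ z) ▷ᵢ (y ▷ⱼ z). In particular (G, ▷₁, ▷₂) is a diquandle. -/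
/-!
Every endomorphism of a cyclic group `⟨g⟩` is a power map `x ↦ x ^ m`, with `m` read off from
the image of `g`; hence any two endomorphisms commute. For commuting endomorphisms `φ, ψ` of an
abelian group, both sides of `(x ▷_φ y) ▷_ψ z = (x ▷_ψ z) ▷_φ (y ▷_ψ z)` expand to
`φψ(x) · φψ(y)⁻¹ · ψ(z)⁻¹ · ψ(y) · z`.
-/

theorem IsCyclic.exists_forall_map_eq_zpow {G : Type*} [Group G] [IsCyclic G] (f : G →* G) :
    ∃ m : ℤ, ∀ x, f x = x ^ m := by
  obtain ⟨g, hg⟩ := _root_.exists_zpow_surjective G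
  obtain ⟨m, hm⟩ := hg (f g)
  refine ⟨m, fun x => ?_⟩
  obtain ⟨k, rfl⟩ := hg x
  rw [map_zpow, ← hm, ← zpow_mul, ← zpow_mul, mul_comm]

theorem IsCyclic.commute_monoidHom {G : Type*} [Group G] [IsCyclic G] (f f' : G →* G) :
    Function.Commute f f' := by
  obtain ⟨m, hm⟩ := exists_forall_map_eq_zpow f
  obtain ⟨n, hn⟩ := exists_forall_map_eq_zpow f'
  intro x
  simp only [hm, hn, ← zpow_mul, mul_comm]

/-- For abelian `G`, in additive notation, this is the Alexander quandle `φ x + (1 - φ) y`. -/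
def alexanderOp {G : Type*} [Group G] (φ : G →* G) (x y : G) : G := (φ y)⁻¹ * φ x * y

section
variable {G : Type*} [Group G]

theorem alexanderOp_self (φ : G →* G) (x : G) : alexanderOp φ x x = x := by
  simp [alexanderOp]

theorem alexanderOp_left_bijective (φ : G ≃* G) (y : G) :
    Function.Bijective (alexanderOp (φ : G →* G) · y) :=
  ((Equiv.mulLeft (φ y)⁻¹).trans (Equiv.mulRight y)).bijective.comp φ.bijective

open scoped IsMulCommutative in
theorem alexanderOp_alexanderOp [IsMulCommutative G] {φ ψ : G →* G} (h : Function.Commute φ ψ)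
    (x y z : G) :
    alexanderOp ψ (alexanderOp φ x y) z =
      alexanderOp φ (alexanderOp ψ x z) (alexanderOp ψ y z) := by
  simp only [alexanderOp, map_mul, map_inv, h.eq]
  apply Additive.ofMul.injective
  simp only [ofMul_mul, ofMul_inv]
  abel
end

/-- Let `G` be a cyclic group and `σ, τ` automorphisms of `G`.
With `x ▷₁ y = σ(y)⁻¹ σ(x) y` and `x ▷₂ y = τ(y)⁻¹ τ(x) y` one has:
(a) `x ▷ᵢ x = x`; (b) each right translation `x ↦ x ▷ᵢ y` is a bijection of `G`;
(c) `(x ▷ᵢ y) ▷ⱼ z = (x ▷ⱼ z) ▷ᵢ (y ▷ⱼ z)` for all `i, j ∈ {1,2}`.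
Hence `(G, ▷₁, ▷₂)` is a diquandle. -/
theorem cyclic_group_diquandle {G : Type*} [Group G] [IsCyclic G]
    (σ τ : G ≃* G) :
    let op : Fin 2 → G → G → G :=
      ![fun x y => (σ y)⁻¹ * σ x * y, fun x y => (τ y)⁻¹ * τ x * y]
    (∀ (i : Fin 2) (x : G), op i x x = x) ∧
    (∀ (i : Fin 2) (y : G), Function.Bijective (fun x : G => op i x y)) ∧
    (∀ (i j : Fin 2) (x y z : G),
      op j (op i x y) z = op i (op j x z) (op j y z)) := by
  intro op
  have hop : ∀ i, ∃ φ : G ≃* G, op i = alexanderOp φ := Fin.forall_fin_two.2 ⟨⟨σ, rfl⟩, ⟨τ, rfl⟩⟩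
  refine ⟨fun i x => ?_, fun i y => ?_, fun i j x y z => ?_⟩
  · obtain ⟨φ, hφ⟩ := hop i
    rw [hφ, alexanderOp_self]
  · obtain ⟨φ, hφ⟩ := hop i
    rw [hφ]
    exact alexanderOp_left_bijective φ y
  · obtain ⟨φ, hφ⟩ := hop i
    obtain ⟨ψ, hψ⟩ := hop j
    rw [hφ, hψ]
    exact alexanderOp_alexanderOp (IsCyclic.commute_monoidHom _ _) x y z
end

section
/- Let (Q, ▷) be a quandle, let n ≥ 1, and let β : Qⁿ → Qⁿ be any map. Define σ : Q^{n+1} → Q^{n+1} by σ(y₁,…,y_{n−1}, yₙ, y_{n+1}) = (y₁,…,y_{n−1}, y_{n+1}, yₙ ▷ y_{n+1}), and define β′ : Q^{n+1} → Q^{n+1} by β′(x₁,…,x_{n+1}) = σ(β(x₁,…,xₙ), x_{n+1}), i.e., β′ applies β to the first n coordinates and then σ. Then a point (x₁,…,xₙ) ∈ Qⁿ is a fixed point of β if and only if (x₁,…,xₙ, xₙ) ∈ Q^{n+1} is a fixed point of β′; moreover the map (x₁,…,xₙ) ↦ (x₁,…,xₙ, xₙ) is a bijection from the fixed point set of β onto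 the fixed point set of β′. -/
/-!
At a fixed point `(y, t)` of `β'` the coordinate overwritten by `t` forces `t = y i`, and the new
strand gives `β y i ▷ t = t = t ▷ t`, so right cancellation yields `β y i = t`; the remaining
coordinates are untouched. Hence the fixed points of `β'` are exactly the `(x, x i)` with `β x = x`.
-/

section MarkovStabilisation

variable {Q ι : Type*} (op : Q → Q → Q)

theorem op_eq_right_iff (hidem : ∀ x, op x x = x) (hinj : ∀ y, Function.Injective (op · y))
    {x y : Q} : op x y = y ↔ x = y := by
  conv_lhs => rhs; rw [← hidem y]
  exact (hinj y).eq_iff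

variable [DecidableEq ι]

/-- The paper's `β'`, with strand `i` in the role of the last strand `n`. -/
def markovStabilisation (i : ι) (β : (ι → Q) → ι → Q) : (ι → Q) × Q → (ι → Q) × Q :=
  fun p => (Function.update (β p.1) i p.2, op (β p.1 i) p.2)

theorem markovStabilisation_apply_eq_self_iff (hidem : ∀ x, op x x = x)
    (hinj : ∀ y, Function.Injective (op · y)) (i : ι) (β : (ι → Q) → ι → Q) (y : ι → Q) (t : Q) :
    markovStabilisation op i β (y, t) = (y, t) ↔ β y = y ∧ y i = t := by
  have hβ : β y = y ↔ β y i = y i ∧ ∀ j ≠ i, β y j = y j := by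
    conv_lhs => rw [← Function.update_eq_self i (β y)]
    exact Function.update_eq_iff
  simp only [markovStabilisation, Prod.mk.injEq, Function.update_eq_iff,
    op_eq_right_iff op hidem hinj, hβ]
  constructor
  · rintro ⟨⟨rfl, hne⟩, hi⟩
    exact ⟨⟨hi, hne⟩, rfl⟩
  · rintro ⟨⟨hi, hne⟩, rfl⟩
    exact ⟨⟨rfl, hne⟩, hi⟩

end MarkovStabilisation

theorem stabilisation_fixedPoints_general {Q : Type*} (op : Q → Q → Q)
    (hidem : ∀ x, op x x = x)
    (hbij : ∀ y, Function.Bijective (fun x => op x y))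
    (n : ℕ) (hn : 0 < n) (β : (Fin n → Q) → (Fin n → Q)) :
    let last : Fin n := ⟨n - 1, Nat.sub_lt hn one_pos⟩
    let σ : (Fin n → Q) × Q → (Fin n → Q) × Q :=
      fun p => (Function.update p.1 last p.2, op (p.1 last) p.2)
    let β' : (Fin n → Q) × Q → (Fin n → Q) × Q :=
      fun p => σ (β p.1, p.2)
    (∀ x : Fin n → Q, β x = x ↔ β' (x, x last) = (x, x last)) ∧
    Set.BijOn (fun x : Fin n → Q => ((x, x last) : (Fin n → Q) × Q))
      {x | β x = x} {p | β' p = p} := by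
  intro last σ β'
  have hfix (y : Fin n → Q) (t : Q) : β' (y, t) = (y, t) ↔ β y = y ∧ y last = t :=
    markovStabilisation_apply_eq_self_iff op hidem (fun y => (hbij y).1) last β y t
  have himage : {p | β' p = p} = (fun x => (x, x last)) '' {x | β x = x} := by
    ext ⟨y, t⟩
    simp only [Set.mem_ofPred_eq, hfix, Set.mem_image, Prod.mk.injEq]
    constructor
    · rintro ⟨hy, rfl⟩
      exact ⟨y, hy, rfl, rfl⟩
    · rintro ⟨x, hx, rfl, rfl⟩
      exact ⟨hx, rfl⟩
  refine ⟨fun x => by simp [hfix], himage ▸ Set.InjOn.bijOn_image ?_⟩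
  exact fun x _ y _ h => congrArg Prod.fst h

/-- **Markov stabilisation and fixed points.**
Let `(Q, ▷)` be a quandle, `n ≥ 1`, and `β : Qⁿ → Qⁿ` any map.  Identify
`Q^{n+1}` with `(Fin n → Q) × Q` (first `n` coordinates, then the last one).
Let `σ` swap the last two coordinates with a crossing,
`σ(y₁,…,y_{n-1},yₙ,y_{n+1}) = (y₁,…,y_{n-1},y_{n+1}, yₙ ▷ y_{n+1})`, and let
`β' = σ ∘ (β × id)`.  Then `x ∈ Qⁿ` is a fixed point of `β` iff `(x, xₙ)` is a
fixed point of `β'`, and `x ↦ (x, xₙ)` is a bijection from `Fix β` onto `Fix β'`. -/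
theorem stabilisation_fixedPoints {Q : Type*} (op : Q → Q → Q)
    (hidem : ∀ x, op x x = x)
    (hbij : ∀ y, Function.Bijective (fun x => op x y))
    (hdist : ∀ x y z, op (op x y) z = op (op x z) (op y z))
    (n : ℕ) (hn : 0 < n) (β : (Fin n → Q) → (Fin n → Q)) :
    let last : Fin n := ⟨n - 1, Nat.sub_lt hn one_pos⟩
    let σ : (Fin n → Q) × Q → (Fin n → Q) × Q :=
      fun p => (Function.update p.1 last p.2, op (p.1 last) p.2)
    let β' : (Fin n → Q) × Q → (Fin n → Q) × Q :=
      fun p => σ (β p.1, p.2)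
    (∀ x : Fin n → Q, β x = x ↔ β' (x, x last) = (x, x last)) ∧
    Set.BijOn (fun x : Fin n → Q => ((x, x last) : (Fin n → Q) × Q))
      {x | β x = x} {p | β' p = p} :=
  stabilisation_fixedPoints_general op hidem hbij n hn β
end

section
/- Let a, b, c be unit vectors in the Euclidean plane ℝ² (i.e., ‖a‖ = ‖b‖ = ‖c‖ = 1), and define x ▷₂ y = 2⟨x,y⟩y − x and x ▷₁ y = x. Then the system of equations a ▷₂ b = a, c ▷₂ b = c, and (b ▷₁ c) ▷₂ a = b holds if and only if (a = b or a = −b) and (c = b or c = −b). Consequently the solution set {(a,b,c) ∈ S¹ × S¹ × S¹ : a ▷₂ b = a, c ▷₂ b = c, (b ▷₁ c) ▷₂ a = b} is the union of four disjoint circles. -/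
/-- The trivial quandle operation `x ▷₁ y = x`. -/
def circOp1 (x _y : EuclideanSpace ℝ (Fin 2)) : EuclideanSpace ℝ (Fin 2) := x

/-- The reflection quandle operation `x ▷₂ y = 2⟨x,y⟩y − x` on the plane. -/
noncomputable def circOp2 (x y : EuclideanSpace ℝ (Fin 2)) :
    EuclideanSpace ℝ (Fin 2) :=
  (2 * (inner ℝ x y : ℝ)) • y - x

/-!
For unit vectors `x ▷₂ y = x` says `⟨x, y⟩ y = x`, i.e. `x = ±y`. Since `b ▷₁ c = b`, the third
equation reads `b ▷₂ a = b`, i.e. `b = ±a`, which already follows from the first. So the solutions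
are the triples `(±b, b, ±b)`: four graphs of continuous maps on `S¹`, each homeomorphic to `S¹`
through the middle coordinate, and pairwise disjoint because `b ≠ -b` on the circle.
-/

open Set Topology Function
open scoped InnerProductSpace

theorem inner_smul_eq_self_iff {E : Type*} [SeminormedAddCommGroup E] [InnerProductSpace ℝ E]
    {x y : E} (hx : ‖x‖ = 1) (hy : ‖y‖ = 1) : ⟪x, y⟫_ℝ • y = x ↔ x = y ∨ x = -y := by
  constructor
  · intro h
    have habs : |⟪x, y⟫_ℝ| = 1 := by simpa [norm_smul, hx, hy] using congrArg norm h
    rcases (abs_eq zero_le_one).mp habs with h1 | h1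
    · left; rw [← h, h1, one_smul]
    · right; rw [← h, h1, neg_one_smul]
  · have hyy : ⟪y, y⟫_ℝ = 1 := by rw [real_inner_self_eq_norm_sq, hy, one_pow]
    rintro (rfl | rfl)
    · rw [hyy, one_smul]
    · rw [inner_neg_left, hyy, neg_one_smul]

theorem circOp2_eq_self_iff {x y : EuclideanSpace ℝ (Fin 2)} (hx : ‖x‖ = 1) (hy : ‖y‖ = 1) :
    circOp2 x y = x ↔ x = y ∨ x = -y := by
  rw [← inner_smul_eq_self_iff hx hy, circOp2, sub_eq_iff_eq_add, ← two_smul ℝ x, mul_smul]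
  exact (smul_right_injective _ two_ne_zero).eq_iff

theorem eq_or_eq_neg_comm {G : Type*} [InvolutiveNeg G] {a b : G} :
    a = b ∨ a = -b ↔ b = a ∨ b = -a := by
  rw [eq_comm (a := a), eq_comm (a := a) (b := -b), neg_eq_iff_eq_neg]

theorem circOp_coloring_iff {a b c : EuclideanSpace ℝ (Fin 2)}
    (ha : ‖a‖ = 1) (hb : ‖b‖ = 1) (hc : ‖c‖ = 1) :
    (circOp2 a b = a ∧ circOp2 c b = c ∧ circOp2 (circOp1 b c) a = b) ↔
      (a = b ∨ a = -b) ∧ (c = b ∨ c = -b) := by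
  rw [circOp1, circOp2_eq_self_iff ha hb, circOp2_eq_self_iff hc hb, circOp2_eq_self_iff hb ha,
    ← eq_or_eq_neg_comm]
  tauto

section Signed

variable {X : Type*} [Neg X]

def signed (s : Bool) (x : X) : X := bif s then x else -x

theorem signed_left_injective {x : X} (hx : x ≠ -x) : Injective (signed · x) := by
  intro s t h
  cases s <;> cases t <;> simp_all [signed, eq_comm]

theorem eq_or_eq_neg_iff_exists_signed {a b : X} : a = b ∨ a = -b ↔ ∃ s, signed s b = a := by
  simp [signed, eq_comm, or_comm]

def signedGraph (s t : Bool) : Set (X × X × X) := range fun x => (signed s x, x, signed t x)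

theorem pairwise_disjoint_signedGraph (hX : ∀ x : X, x ≠ -x) :
    Pairwise (Disjoint on fun st : Bool × Bool => signedGraph (X := X) st.1 st.2) := by
  rintro ⟨s, t⟩ ⟨s', t'⟩ hne
  refine disjoint_range_iff.mpr fun x y h => hne ?_
  simp only [Prod.mk.injEq] at h
  obtain ⟨hs, rfl, ht⟩ := h
  rw [signed_left_injective (hX x) hs, signed_left_injective (hX x) ht]

variable [TopologicalSpace X] [ContinuousNeg X]

theorem continuous_signed (s : Bool) : Continuous (signed s : X → X) := by
  cases s
  · exact continuous_neg
  · exact continuous_id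

noncomputable def signedGraphHomeomorph (s t : Bool) : signedGraph (X := X) s t ≃ₜ X :=
  (LeftInverse.isEmbedding (f := fun p : X × X × X => p.2.1) (fun _ => rfl) (by fun_prop)
    ((continuous_signed s).prodMk (continuous_id.prodMk (continuous_signed t)))).toHomeomorph.symm

end Signed

local notation "S¹" => Metric.sphere (0 : EuclideanSpace ℝ (Fin 2)) 1

theorem circOp_coloringSet_eq_iUnion :
    {p : S¹ × S¹ × S¹ | circOp2 p.1 p.2.1 = p.1 ∧ circOp2 p.2.2 p.2.1 = p.2.2 ∧
      circOp2 (circOp1 p.2.1 p.2.2) p.1 = p.2.1} = ⋃ st : Bool × Bool, signedGraph st.1 st.2 := by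
  ext ⟨a, b, c⟩
  simp only [mem_ofPred_eq, mem_iUnion, signedGraph, mem_range, Prod.mk.injEq, Prod.exists]
  rw [circOp_coloring_iff (norm_eq_of_mem_sphere a) (norm_eq_of_mem_sphere b)
    (norm_eq_of_mem_sphere c)]
  simp only [← coe_neg_sphere, Subtype.coe_inj, eq_or_eq_neg_iff_exists_signed]
  constructor
  · rintro ⟨⟨s, rfl⟩, ⟨t, rfl⟩⟩
    exact ⟨s, t, b, rfl, rfl, rfl⟩
  · rintro ⟨s, t, _, rfl, rfl, rfl⟩
    exact ⟨⟨s, rfl⟩, ⟨t, rfl⟩⟩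

/-- For unit vectors `a, b, c` in the plane, the coloring system
`a ▷₂ b = a`, `c ▷₂ b = c`, `(b ▷₁ c) ▷₂ a = b` holds iff `(a = b ∨ a = −b)` and
`(c = b ∨ c = −b)`.  Consequently the solution set inside `S¹ × S¹ × S¹` is a
disjoint union of four circles. -/
theorem dichromatic_link_L2_invariant :
    (∀ a b c : EuclideanSpace ℝ (Fin 2), ‖a‖ = 1 → ‖b‖ = 1 → ‖c‖ = 1 →
      ((circOp2 a b = a ∧ circOp2 c b = c ∧ circOp2 (circOp1 b c) a = b) ↔
        ((a = b ∨ a = -b) ∧ (c = b ∨ c = -b)))) ∧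
    ∃ T : Fin 4 →
        Set (Metric.sphere (0 : EuclideanSpace ℝ (Fin 2)) 1 ×
          Metric.sphere (0 : EuclideanSpace ℝ (Fin 2)) 1 ×
          Metric.sphere (0 : EuclideanSpace ℝ (Fin 2)) 1),
      ({p | circOp2 (p.1 : EuclideanSpace ℝ (Fin 2)) (p.2.1 : EuclideanSpace ℝ (Fin 2)) = p.1 ∧
            circOp2 (p.2.2 : EuclideanSpace ℝ (Fin 2)) (p.2.1 : EuclideanSpace ℝ (Fin 2)) = p.2.2 ∧
            circOp2 (circOp1 (p.2.1 : EuclideanSpace ℝ (Fin 2)) (p.2.2 : EuclideanSpace ℝ (Fin 2)))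
              (p.1 : EuclideanSpace ℝ (Fin 2)) = p.2.1} = ⋃ i, T i) ∧
      Pairwise (Function.onFun Disjoint T) ∧
      ∀ i, Nonempty ((T i) ≃ₜ Metric.sphere (0 : EuclideanSpace ℝ (Fin 2)) 1) := by
  let e : Fin 4 ≃ Bool × Bool := finProdFinEquiv.symm.trans (finTwoEquiv.prodCongr finTwoEquiv)
  refine ⟨fun a b c => circOp_coloring_iff, fun i => signedGraph (e i).1 (e i).2, ?_, ?_,
    fun i => ⟨signedGraphHomeomorph _ _⟩⟩
  · rw [circOp_coloringSet_eq_iUnion, e.surjective.iUnion_comp (fun st => signedGraph st.1 st.2)]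
  · exact (pairwise_disjoint_signedGraph (ne_neg_of_mem_unit_sphere ℝ)).comp_of_injective
      e.injective
end
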